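/- arXiv:1008.4232 — 2 statements merged into one kernel-verified Lean document; each statement's English description precedes it below -/
import Mathlib

section
/- For any probabilistic algorithm of choosing between two experts (i.e., any sequence of functions p_t giving the probability P{I_t = 1} of following expert 1 at step t as a function of the experts' past losses) and for any ε with 0 < ε < 1, there exist two sequences of nonnegative one-step losses s^1_t, s^2_t (t = 1, 2, …) such that, with v_0 = 1, the volume v_t tends to infinity as t → ∞ and, for all t: fluc(t) ≥ 1 − ε and (1/v_t)·E(s_{1:t} − min_{i=1,2} s^i_{1:t}) ≥ (1 − ε)/2, where E(s_{1:t}) = Σ_{j=1}^t (s^1_j · p_j + s^2_j · (1 − p_j)) is the expected cumulative loss of the algorithm. -/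
/-!
The adversary puts, at step `t + 1`, the loss `K v_t` on the expert that the algorithm follows
with probability at least `1/2`, and loss `0` on the other one. Then `v_t = (1 + K)^t`, so
`fluc(t) = K / (1 + K)`. The algorithm pays at least half of every volume increment, hence
`E(s_{1:t}) ≥ (v_t - 1) / 2`, while the expert spared at step `t` has cumulative loss at most
`v_{t-1} - 1`. The regret is therefore at least `(1/2 - 1/(1 + K)) v_t`, and `K = 2/ε` gives
both bounds.
-/

open Filter Finset

noncomputable section

/-- The volume of the two-expert game with initial volume `v_0 = 1`:
`v_t = 1 + ∑_{j=1}^t max(|s^1_j|, |s^2_j|)`. -/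
def vol2 (s1 s2 : ℕ → ℝ) (t : ℕ) : ℝ :=
  1 + ∑ j ∈ Finset.Icc 1 t, max |s1 j| |s2 j|

/-- The expected cumulative loss `E(s_{1:t})` of the probabilistic algorithm `p`
(where `p t s1 s2` is the probability of following expert 1 at step `t`). -/
def expCumLoss (p : ℕ → (ℕ → ℝ) → (ℕ → ℝ) → ℝ) (s1 s2 : ℕ → ℝ) (t : ℕ) : ℝ :=
  ∑ j ∈ Finset.Icc 1 t, (s1 j * p j s1 s2 + s2 j * (1 - p j s1 s2))

section Volume

variable (s1 s2 : ℕ → ℝ)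

theorem one_le_vol2 (t : ℕ) : 1 ≤ vol2 s1 s2 t :=
  le_add_of_nonneg_right <| sum_nonneg fun _ _ => (abs_nonneg _).trans (le_max_left _ _)

theorem vol2_succ (t : ℕ) :
    vol2 s1 s2 (t + 1) = vol2 s1 s2 t + max |s1 (t + 1)| |s2 (t + 1)| := by
  rw [vol2, vol2, sum_Icc_succ_top (by omega), add_assoc]

theorem vol2_congr {s1 s2 s1' s2' : ℕ → ℝ} {t : ℕ}
    (h : ∀ j ≤ t, s1 j = s1' j ∧ s2 j = s2' j) : vol2 s1 s2 t = vol2 s1' s2' t := by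
  refine congrArg (1 + ·) (sum_congr rfl fun j hj => ?_)
  obtain ⟨h1, h2⟩ := h j (mem_Icc.1 hj).2
  rw [h1, h2]

theorem sum_Icc_fst_le_vol2_sub_one (t : ℕ) : ∑ j ∈ Icc 1 t, s1 j ≤ vol2 s1 s2 t - 1 := by
  rw [vol2, add_sub_cancel_left]
  exact sum_le_sum fun _ _ => (le_abs_self _).trans (le_max_left _ _)

theorem sum_Icc_snd_le_vol2_sub_one (t : ℕ) : ∑ j ∈ Icc 1 t, s2 j ≤ vol2 s1 s2 t - 1 := by
  rw [vol2, add_sub_cancel_left]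
  exact sum_le_sum fun _ _ => (le_abs_self _).trans (le_max_right _ _)

theorem min_sum_Icc_succ_le_vol2_sub_one {t : ℕ} (h : s1 (t + 1) = 0 ∨ s2 (t + 1) = 0) :
    min (∑ j ∈ Icc 1 (t + 1), s1 j) (∑ j ∈ Icc 1 (t + 1), s2 j) ≤ vol2 s1 s2 t - 1 := by
  rw [sum_Icc_succ_top (by omega), sum_Icc_succ_top (by omega)]
  rcases h with h | h
  · rw [h, add_zero]
    exact (min_le_left _ _).trans (sum_Icc_fst_le_vol2_sub_one s1 s2 t)
  · rw [h, add_zero]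
    exact (min_le_right _ _).trans (sum_Icc_snd_le_vol2_sub_one s1 s2 t)

end Volume

section ExpectedLoss

variable (p : ℕ → (ℕ → ℝ) → (ℕ → ℝ) → ℝ) (s1 s2 : ℕ → ℝ)

theorem expCumLoss_succ (t : ℕ) :
    expCumLoss p s1 s2 (t + 1) = expCumLoss p s1 s2 t +
      (s1 (t + 1) * p (t + 1) s1 s2 + s2 (t + 1) * (1 - p (t + 1) s1 s2)) := by
  rw [expCumLoss, expCumLoss, sum_Icc_succ_top (by omega)]

theorem vol2_sub_one_div_two_le_expCumLoss
    (h : ∀ t, max |s1 (t + 1)| |s2 (t + 1)| / 2 ≤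
      s1 (t + 1) * p (t + 1) s1 s2 + s2 (t + 1) * (1 - p (t + 1) s1 s2)) (t : ℕ) :
    (vol2 s1 s2 t - 1) / 2 ≤ expCumLoss p s1 s2 t := by
  induction t with
  | zero => simp [vol2, expCumLoss]
  | succ t ih => rw [vol2_succ, expCumLoss_succ]; linarith [h t]

end ExpectedLoss

section Adversary

def DependsOnlyOnPast (p : ℕ → (ℕ → ℝ) → (ℕ → ℝ) → ℝ) : Prop :=
  ∀ (t : ℕ) (s1 s2 s1' s2' : ℕ → ℝ),
    (∀ j, j < t → s1 j = s1' j ∧ s2 j = s2' j) → p t s1 s2 = p t s1' s2'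

def adversaryStep (q M : ℝ) : ℝ × ℝ :=
  if 1 / 2 ≤ q then (M, 0) else (0, M)

variable {M : ℝ} (q : ℝ)

theorem adversaryStep_nonneg (hM : 0 ≤ M) :
    0 ≤ (adversaryStep q M).1 ∧ 0 ≤ (adversaryStep q M).2 := by
  unfold adversaryStep
  split_ifs <;> exact ⟨by simp [hM], by simp [hM]⟩

theorem max_abs_adversaryStep (hM : 0 ≤ M) :
    max |(adversaryStep q M).1| |(adversaryStep q M).2| = M := by
  unfold adversaryStep
  split_ifs <;> simp [abs_of_nonneg hM, hM]

theorem half_le_adversaryStep_loss (hM : 0 ≤ M) :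
    M / 2 ≤ (adversaryStep q M).1 * q + (adversaryStep q M).2 * (1 - q) := by
  unfold adversaryStep
  split_ifs with hq
  · simp only [zero_mul, add_zero]; nlinarith
  · simp only [zero_mul, zero_add]; nlinarith

theorem adversaryStep_fst_eq_zero_or_snd_eq_zero :
    (adversaryStep q M).1 = 0 ∨ (adversaryStep q M).2 = 0 := by
  unfold adversaryStep
  split_ifs <;> simp

/-- The algorithm is consulted on the losses truncated after step `t`, which makes the recursion
well founded; for an algorithm that depends only on the past this does not change its choice. -/
def adversary (p : ℕ → (ℕ → ℝ) → (ℕ → ℝ) → ℝ) (K : ℝ) : ℕ → ℝ × ℝ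
  | 0 => (0, 0)
  | t + 1 =>
    let past₁ : ℕ → ℝ := fun j => if _ : j ≤ t then (adversary p K j).1 else 0
    let past₂ : ℕ → ℝ := fun j => if _ : j ≤ t then (adversary p K j).2 else 0
    adversaryStep (p (t + 1) past₁ past₂) (K * vol2 past₁ past₂ t)

def advLoss₁ (p : ℕ → (ℕ → ℝ) → (ℕ → ℝ) → ℝ) (K : ℝ) (t : ℕ) : ℝ := (adversary p K t).1

def advLoss₂ (p : ℕ → (ℕ → ℝ) → (ℕ → ℝ) → ℝ) (K : ℝ) (t : ℕ) : ℝ := (adversary p K t).2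

variable {p : ℕ → (ℕ → ℝ) → (ℕ → ℝ) → ℝ} {K : ℝ}

theorem adversary_succ (hpast : DependsOnlyOnPast p) (t : ℕ) :
    adversary p K (t + 1) = adversaryStep (p (t + 1) (advLoss₁ p K) (advLoss₂ p K))
      (K * vol2 (advLoss₁ p K) (advLoss₂ p K) t) := by
  rw [adversary]
  congr 1
  · exact hpast _ _ _ _ _ fun j hj => by simp [advLoss₁, advLoss₂, Nat.le_of_lt_succ hj]
  · exact congrArg (K * ·) (vol2_congr fun j hj => by simp [advLoss₁, advLoss₂, hj])

theorem advLoss₁_succ (hpast : DependsOnlyOnPast p) (t : ℕ) :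
    advLoss₁ p K (t + 1) = (adversaryStep (p (t + 1) (advLoss₁ p K) (advLoss₂ p K))
      (K * vol2 (advLoss₁ p K) (advLoss₂ p K) t)).1 :=
  congrArg Prod.fst (adversary_succ hpast t)

theorem advLoss₂_succ (hpast : DependsOnlyOnPast p) (t : ℕ) :
    advLoss₂ p K (t + 1) = (adversaryStep (p (t + 1) (advLoss₁ p K) (advLoss₂ p K))
      (K * vol2 (advLoss₁ p K) (advLoss₂ p K) t)).2 :=
  congrArg Prod.snd (adversary_succ hpast t)

theorem advLoss_nonneg (hpast : DependsOnlyOnPast p) (hK : 0 ≤ K) (t : ℕ) :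
    0 ≤ advLoss₁ p K t ∧ 0 ≤ advLoss₂ p K t := by
  cases t with
  | zero => simp [advLoss₁, advLoss₂, adversary]
  | succ t =>
    rw [advLoss₁_succ hpast, advLoss₂_succ hpast]
    exact adversaryStep_nonneg _ (mul_nonneg hK (zero_le_one.trans (one_le_vol2 _ _ t)))

theorem vol2_adversary (hpast : DependsOnlyOnPast p) (hK : 0 ≤ K) (t : ℕ) :
    vol2 (advLoss₁ p K) (advLoss₂ p K) t = (1 + K) ^ t := by
  induction t with
  | zero => simp [vol2]
  | succ t ih =>
    rw [vol2_succ, advLoss₁_succ hpast, advLoss₂_succ hpast, max_abs_adversaryStep, ih, pow_succ]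
    · ring
    · exact mul_nonneg hK (zero_le_one.trans (one_le_vol2 _ _ t))

theorem fluc_adversary (hpast : DependsOnlyOnPast p) (hK : 0 ≤ K) (t : ℕ) :
    (vol2 (advLoss₁ p K) (advLoss₂ p K) (t + 1) - vol2 (advLoss₁ p K) (advLoss₂ p K) t) /
      vol2 (advLoss₁ p K) (advLoss₂ p K) (t + 1) = 1 - 1 / (1 + K) := by
  rw [vol2_adversary hpast hK, vol2_adversary hpast hK, pow_succ]
  field_simp

theorem half_max_abs_advLoss_le_step_loss (hpast : DependsOnlyOnPast p) (hK : 0 ≤ K) (t : ℕ) :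
    max |advLoss₁ p K (t + 1)| |advLoss₂ p K (t + 1)| / 2 ≤
      advLoss₁ p K (t + 1) * p (t + 1) (advLoss₁ p K) (advLoss₂ p K) +
        advLoss₂ p K (t + 1) * (1 - p (t + 1) (advLoss₁ p K) (advLoss₂ p K)) := by
  have hM := mul_nonneg hK (zero_le_one.trans (one_le_vol2 (advLoss₁ p K) (advLoss₂ p K) t))
  rw [advLoss₁_succ hpast, advLoss₂_succ hpast, max_abs_adversaryStep _ hM]
  exact half_le_adversaryStep_loss _ hM

theorem regret_adversary (hpast : DependsOnlyOnPast p) (hK : 0 ≤ K) (t : ℕ) :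
    1 / 2 - 1 / (1 + K) ≤ 1 / vol2 (advLoss₁ p K) (advLoss₂ p K) (t + 1) *
      (expCumLoss p (advLoss₁ p K) (advLoss₂ p K) (t + 1) -
        min (∑ j ∈ Icc 1 (t + 1), advLoss₁ p K j) (∑ j ∈ Icc 1 (t + 1), advLoss₂ p K j)) := by
  set v := vol2 (advLoss₁ p K) (advLoss₂ p K)
  have hE : (v (t + 1) - 1) / 2 ≤ expCumLoss p (advLoss₁ p K) (advLoss₂ p K) (t + 1) :=
    vol2_sub_one_div_two_le_expCumLoss _ _ _ (half_max_abs_advLoss_le_step_loss hpast hK) _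
  have hmin : min (∑ j ∈ Icc 1 (t + 1), advLoss₁ p K j) (∑ j ∈ Icc 1 (t + 1), advLoss₂ p K j) ≤
      v t - 1 := by
    refine min_sum_Icc_succ_le_vol2_sub_one _ _ ?_
    rw [advLoss₁_succ hpast, advLoss₂_succ hpast]
    exact adversaryStep_fst_eq_zero_or_snd_eq_zero _
  have hv : v (t + 1) = (1 + K) * v t := by
    simp only [v, vol2_adversary hpast hK, pow_succ]
    ring
  have hv_pos : 0 < v t := zero_lt_one.trans_le (one_le_vol2 _ _ t)
  calc 1 / 2 - 1 / (1 + K) = 1 / v (t + 1) * (v (t + 1) / 2 - v t) := by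
        rw [hv]; field_simp
    _ ≤ _ := mul_le_mul_of_nonneg_left (by linarith)
        (one_div_nonneg.2 (zero_le_one.trans (one_le_vol2 _ _ _)))

end Adversary

theorem statement0_general
    (p : ℕ → (ℕ → ℝ) → (ℕ → ℝ) → ℝ)
    (hpast : ∀ (t : ℕ) (s1 s2 s1' s2' : ℕ → ℝ),
      (∀ j, j < t → s1 j = s1' j ∧ s2 j = s2' j) → p t s1 s2 = p t s1' s2')
    (ε : ℝ) (hε0 : 0 < ε) :
    ∃ s1 s2 : ℕ → ℝ,
      (∀ t, 0 ≤ s1 t) ∧ (∀ t, 0 ≤ s2 t) ∧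
      Tendsto (vol2 s1 s2) atTop atTop ∧
      (∀ t : ℕ, 1 ≤ t →
        (vol2 s1 s2 t - vol2 s1 s2 (t - 1)) / vol2 s1 s2 t ≥ 1 - ε ∧
        (1 / vol2 s1 s2 t) *
          (expCumLoss p s1 s2 t -
            min (∑ j ∈ Finset.Icc 1 t, s1 j) (∑ j ∈ Finset.Icc 1 t, s2 j))
          ≥ (1 - ε) / 2) := by
  set K : ℝ := 2 / ε
  have hK : 0 < K := by positivity
  have hKε : 1 / (1 + K) ≤ ε / 2 := by
    rw [div_le_div_iff₀ (by positivity) two_pos]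
    have : ε * (1 + K) = ε + 2 := by simp only [K]; field_simp
    linarith
  refine ⟨advLoss₁ p K, advLoss₂ p K, fun t => (advLoss_nonneg hpast hK.le t).1,
    fun t => (advLoss_nonneg hpast hK.le t).2, ?_, ?_⟩
  · exact (tendsto_pow_atTop_atTop_of_one_lt (by linarith)).congr
      fun t => (vol2_adversary hpast hK.le t).symm
  · rintro (_ | t) ht
    · exact absurd ht (by norm_num)
    rw [Nat.add_sub_cancel, fluc_adversary hpast hK.le]
    exact ⟨by linarith, le_trans (by linarith) (regret_adversary hpast hK.le t)⟩

theorem statement0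
    (p : ℕ → (ℕ → ℝ) → (ℕ → ℝ) → ℝ)
    (hp : ∀ t s1 s2, 0 ≤ p t s1 s2 ∧ p t s1 s2 ≤ 1)
    (hpast : ∀ (t : ℕ) (s1 s2 s1' s2' : ℕ → ℝ),
      (∀ j, j < t → s1 j = s1' j ∧ s2 j = s2' j) → p t s1 s2 = p t s1' s2')
    (ε : ℝ) (hε0 : 0 < ε) (hε1 : ε < 1) :
    ∃ s1 s2 : ℕ → ℝ,
      (∀ t, 0 ≤ s1 t) ∧ (∀ t, 0 ≤ s2 t) ∧
      Tendsto (vol2 s1 s2) atTop atTop ∧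
      (∀ t : ℕ, 1 ≤ t →
        (vol2 s1 s2 t - vol2 s1 s2 (t - 1)) / vol2 s1 s2 t ≥ 1 - ε ∧
        (1 / vol2 s1 s2 t) *
          (expCumLoss p s1 s2 t -
            min (∑ j ∈ Finset.Icc 1 t, s1 j) (∑ j ∈ Finset.Icc 1 t, s2 j))
          ≥ (1 - ε) / 2) :=
  statement0_general p hpast ε hε0
end
end

section
/- Let N ≥ 2, let I and J be random variables with values in {1, …, N}, let d^1, …, d^N ∈ ℝ be numbers with |d^j| ≤ Δ for all j where Δ ≥ 0, and suppose P{I = j} ≤ exp{(3/a)·r}·P{J = j} for all j, where a > 0 and 0 ≤ r ≤ 1. If moreover |E(d^J)| ≤ Δ, then E(d^I) ≤ E(d^J) + 2(e^{3/a} − 1)·r·Δ. -/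
open MeasureTheory ProbabilityTheory

/-!
Shifting every loss by `Δ` makes it nonnegative, so the pointwise bound
`P{I = j} ≤ e^{cr} P{J = j}` (with `c = 3/a`) gives `E d^I + Δ ≤ e^{cr} (E d^J + Δ)`.
Convexity of `exp` gives `e^{cr} ≤ 1 + (e^c - 1) r`, and `0 ≤ E d^J + Δ ≤ 2Δ`.
-/

section FiniteValued

variable {Ω ι : Type*} [MeasurableSpace Ω] [Fintype ι] [MeasurableSpace ι]
  [DiscreteMeasurableSpace ι] (P : Measure Ω) {X : Ω → ι}

theorem integral_comp_eq_sum_measureReal [IsFiniteMeasure P] (hX : Measurable X) (f : ι → ℝ) :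
    ∫ ω, f (X ω) ∂P = ∑ j, P.real {ω | X ω = j} * f j := by
  rw [← integral_map hX.aemeasurable (measurable_of_countable f).aestronglyMeasurable,
    integral_fintype .of_finite]
  refine Finset.sum_congr rfl fun j _ => ?_
  rw [map_measureReal_apply hX (measurableSet_singleton j), smul_eq_mul]
  rfl

theorem sum_measureReal_eq_one [IsProbabilityMeasure P] (hX : Measurable X) : ∑ j, P.real {ω | X ω = j} = 1 := by
  refine (sum_measureReal_preimage_singleton (μ := P) Finset.univ
    fun j _ => hX (measurableSet_singleton j)).trans ?_
  simp

end FiniteValued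

theorem sum_mul_add_le_mul_of_le_mul {ι : Type*} [Fintype ι] {p q f : ι → ℝ} {K Δ : ℝ}
    (hp : ∑ j, p j = 1) (hq : ∑ j, q j = 1) (hpq : ∀ j, p j ≤ K * q j)
    (hf : ∀ j, 0 ≤ f j + Δ) :
    ∑ j, p j * f j + Δ ≤ K * (∑ j, q j * f j + Δ) := by
  have shift : ∀ w : ι → ℝ, ∑ j, w j = 1 → ∑ j, w j * f j + Δ = ∑ j, w j * (f j + Δ) := by
    intro w hw
    simp only [mul_add, Finset.sum_add_distrib, ← Finset.sum_mul, hw, one_mul]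
  rw [shift p hp, shift q hq, Finset.mul_sum]
  refine Finset.sum_le_sum fun j _ => ?_
  rw [← mul_assoc]
  exact mul_le_mul_of_nonneg_right (hpq j) (hf j)

theorem Real.exp_mul_le_one_add_mul (c : ℝ) {r : ℝ} (hr0 : 0 ≤ r) (hr1 : r ≤ 1) :
    Real.exp (c * r) ≤ 1 + (Real.exp c - 1) * r := by
  have := convexOn_exp.2 (Set.mem_univ 0) (Set.mem_univ c) (sub_nonneg.2 hr1) hr0
    (sub_add_cancel 1 r)
  simp only [smul_eq_mul, mul_zero, zero_add, Real.exp_zero] at this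
  rw [mul_comm c]
  linarith

theorem measureReal_le_mul_of_le_ofReal_mul {Ω : Type*} [MeasurableSpace Ω] {P : Measure Ω}
    [IsFiniteMeasure P] {s t : Set Ω} {K : ℝ} (hK : 0 ≤ K)
    (h : P s ≤ ENNReal.ofReal K * P t) : P.real s ≤ K * P.real t := by
  have := ENNReal.toReal_mono (by finiteness) h
  rwa [ENNReal.toReal_mul, ENNReal.toReal_ofReal hK] at this

theorem statement6_general {N : ℕ}
    (Ω : Type) [MeasurableSpace Ω] (P : Measure Ω) [IsProbabilityMeasure P]
    (I J : Ω → Fin N) (hI : Measurable I) (hJ : Measurable J)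
    (d : Fin N → ℝ) (Δ a r : ℝ) (ha : 0 < a)
    (hr0 : 0 ≤ r) (hr1 : r ≤ 1)
    (hd : ∀ j, |d j| ≤ Δ)
    (hcomp : ∀ j : Fin N,
      P {ω | I ω = j} ≤ ENNReal.ofReal (Real.exp ((3 / a) * r)) * P {ω | J ω = j})
    (hEJ : |∫ ω, d (J ω) ∂P| ≤ Δ) :
    (∫ ω, d (I ω) ∂P) ≤ (∫ ω, d (J ω) ∂P) + 2 * (Real.exp (3 / a) - 1) * r * Δ := by
  set c := 3 / a
  have shifted : ∫ ω, d (I ω) ∂P + Δ ≤ Real.exp (c * r) * (∫ ω, d (J ω) ∂P + Δ) := by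
    simp only [integral_comp_eq_sum_measureReal P hI, integral_comp_eq_sum_measureReal P hJ]
    exact sum_mul_add_le_mul_of_le_mul (sum_measureReal_eq_one P hI)
      (sum_measureReal_eq_one P hJ)
      (fun j => measureReal_le_mul_of_le_ofReal_mul (Real.exp_pos _).le (hcomp j))
      (fun j => neg_le_iff_add_nonneg.1 (abs_le.1 (hd j)).1)
  obtain ⟨hEJ_lower, hEJ_upper⟩ := abs_le.1 hEJ
  have hc : 0 ≤ Real.exp c - 1 := sub_nonneg.2 (Real.one_le_exp (by positivity))
  calc ∫ ω, d (I ω) ∂P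
      ≤ Real.exp (c * r) * (∫ ω, d (J ω) ∂P + Δ) - Δ := by linarith
    _ ≤ (1 + (Real.exp c - 1) * r) * (∫ ω, d (J ω) ∂P + Δ) - Δ := by
        gcongr
        · linarith
        · exact Real.exp_mul_le_one_add_mul c hr0 hr1
    _ ≤ (∫ ω, d (J ω) ∂P) + 2 * (Real.exp c - 1) * r * Δ := by
        have hslack :
            (Real.exp c - 1) * r * (∫ ω, d (J ω) ∂P + Δ) ≤ (Real.exp c - 1) * r * (2 * Δ) := by
          gcongr
          linarith
        linarith

theorem statement6 {N : ℕ} (hN : 2 ≤ N)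
    (Ω : Type) [MeasurableSpace Ω] (P : Measure Ω) [IsProbabilityMeasure P]
    (I J : Ω → Fin N) (hI : Measurable I) (hJ : Measurable J)
    (d : Fin N → ℝ) (Δ a r : ℝ) (hΔ : 0 ≤ Δ) (ha : 0 < a)
    (hr0 : 0 ≤ r) (hr1 : r ≤ 1)
    (hd : ∀ j, |d j| ≤ Δ)
    (hcomp : ∀ j : Fin N,
      P {ω | I ω = j} ≤ ENNReal.ofReal (Real.exp ((3 / a) * r)) * P {ω | J ω = j})
    (hEJ : |∫ ω, d (J ω) ∂P| ≤ Δ) :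
    (∫ ω, d (I ω) ∂P) ≤ (∫ ω, d (J ω) ∂P) + 2 * (Real.exp (3 / a) - 1) * r * Δ :=
  statement6_general Ω P I J hI hJ d Δ a r ha hr0 hr1 hd hcomp hEJ
end
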